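/- arXiv:1911.05728 — 5 statements merged into one kernel-verified Lean document; each statement's English description precedes it below -/
import Mathlib

section
/- Let n ≥ 1 and m ≥ 1 be integers, 𝒳 a set, X : Fin n → 𝒳 covariates, A : Fin n → Fin m treatments, W T : Fin n → ℝ, and π μ : Fin m → 𝒳 → ℝ. Define SAPE(π) = (1/n)·Σ_{i=1}^n Σ_{a=1}^m π_a(X_i)·μ_a(X_i), the weighted estimator ψ̂_W = (1/n)·Σ_{i=1}^n W_i·T_i, the bias functional B(W,π;μ) = (1/n)·Σ_{i=1}^n Σ_{a=1}^m (W_i·δ_{A_i a} − π_a(X_i))·μ_a(X_i) where δ_{A_i a} = 1 if A_i = a and 0 otherwise, and the residuals ε_i = T_i − μ_{A_i}(X_i). Then ψ̂_W − SAPE(π) = B(W,π;μ) + (1/n)·Σ_{i=1}^n W_i·ε_i. -/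
open Finset

/-- decomposition of the weighted estimator's error into bias and
weighted residual terms. -/
theorem weighted_estimator_decomposition
    (n m : ℕ) (hn : 1 ≤ n) (hm : 1 ≤ m) (𝒳 : Type*)
    (X : Fin n → 𝒳) (A : Fin n → Fin m) (W T : Fin n → ℝ)
    (π μ : Fin m → 𝒳 → ℝ)
    (SAPE : ℝ) (hSAPE : SAPE = (1 / n) * ∑ i : Fin n, ∑ a : Fin m, π a (X i) * μ a (X i))
    (ψ : ℝ) (hψ : ψ = (1 / n) * ∑ i : Fin n, W i * T i)
    (B : ℝ) (hB : B = (1 / n) * ∑ i : Fin n, ∑ a : Fin m,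
      (W i * (if A i = a then (1 : ℝ) else 0) - π a (X i)) * μ a (X i))
    (ε : Fin n → ℝ) (hε : ∀ i, ε i = T i - μ (A i) (X i)) :
    ψ - SAPE = B + (1 / n) * ∑ i : Fin n, W i * ε i := by
  subst hSAPE hψ hB
  simp only [hε, sub_mul, Finset.sum_sub_distrib, mul_sub]
  have h : ∀ i : Fin n, ∑ a : Fin m, W i * (if A i = a then (1:ℝ) else 0) * μ a (X i)
      = W i * μ (A i) (X i) := by
    intro i
    rw [Finset.sum_eq_single (A i)]
    · simp
    · intro b _ hb; simp [Ne.symm hb]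
    · simp
  simp only [h]
  ring
end

section
/- Let (Ω, ℱ, P) be a probability space, δ > 0, and let U, V, S_τ : Ω → ℝ be random variables with U ≥ 0 almost everywhere, U integrable, |V − S_τ| ≤ U almost everywhere, S_τ ≥ δ almost everywhere, and V > 0 almost everywhere. Then for any constants c ≥ 0 and c' ≥ 0, E[min(c·U/V, c')] ≤ (2/δ)·(c + c')·E[U]. -/
open MeasureTheory

/-- composite bound combining the event-splitting and Markov
steps: the truncated ratio of the estimation error `U` to the estimated
survival probability `V` is bounded in expectation by a constant multiple of
`E[U]`. -/
theorem truncated_ratio_composite_bound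
    {Ω : Type*} {ℱ : MeasurableSpace Ω} (P : Measure Ω) [IsProbabilityMeasure P]
    (δ : ℝ) (hδ : 0 < δ) (U V Sτ : Ω → ℝ)
    (hU : Measurable U) (hV : Measurable V)
    (hU0 : ∀ᵐ ω ∂P, 0 ≤ U ω) (hUInt : Integrable U P)
    (hVS : ∀ᵐ ω ∂P, |V ω - Sτ ω| ≤ U ω)
    (hSτ : ∀ᵐ ω ∂P, δ ≤ Sτ ω) (hV0 : ∀ᵐ ω ∂P, 0 < V ω)
    (c c' : ℝ) (hc : 0 ≤ c) (hc' : 0 ≤ c') :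
    ∫ ω, min (c * U ω / V ω) c' ∂P ≤ (2 / δ) * (c + c') * ∫ ω, U ω ∂P := by
  have hptwise : ∀ᵐ ω ∂P, min (c * U ω / V ω) c' ≤ (2 / δ) * (c + c') * U ω := by
    filter_upwards [hU0, hVS, hSτ, hV0] with ω h0 hvs hs hv
    by_cases hcase : δ / 2 ≤ V ω
    · calc min (c * U ω / V ω) c' ≤ c * U ω / V ω := min_le_left _ _
        _ ≤ c * U ω / (δ / 2) := by
            apply div_le_div_of_nonneg_left (by positivity) (by linarith) hcase
        _ = (2 / δ) * c * U ω := by field_simp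
        _ ≤ (2 / δ) * (c + c') * U ω := by
            apply mul_le_mul_of_nonneg_right _ h0
            apply mul_le_mul_of_nonneg_left (by linarith) (by positivity)
    · push_neg at hcase
      have hUbig : δ / 2 ≤ U ω := by
        have : δ / 2 ≤ Sτ ω - V ω := by linarith
        calc δ / 2 ≤ Sτ ω - V ω := this
          _ ≤ |V ω - Sτ ω| := by rw [abs_sub_comm]; exact le_abs_self _
          _ ≤ U ω := hvs
      calc min (c * U ω / V ω) c' ≤ c' := min_le_right _ _
        _ = (2 / δ) * c' * (δ / 2) := by field_simp
        _ ≤ (2 / δ) * c' * U ω := by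
            apply mul_le_mul_of_nonneg_left hUbig (by positivity)
        _ ≤ (2 / δ) * (c + c') * U ω := by
            apply mul_le_mul_of_nonneg_right _ h0
            apply mul_le_mul_of_nonneg_left (by linarith) (by positivity)
  have hmeas : AEStronglyMeasurable (fun ω => min (c * U ω / V ω) c') P :=
    (((hU.const_mul c).div hV).min measurable_const).aestronglyMeasurable
  have hIntLHS : Integrable (fun ω => min (c * U ω / V ω) c') P := by
    apply Integrable.mono' (integrable_const c') hmeas
    filter_upwards [hU0, hV0] with ω h0 hv
    rw [Real.norm_eq_abs, abs_of_nonneg (le_min (by positivity) hc')]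
    exact min_le_right _ _
  calc ∫ ω, min (c * U ω / V ω) c' ∂P ≤ ∫ ω, (2 / δ) * (c + c') * U ω ∂P :=
        integral_mono_ae hIntLHS (hUInt.const_mul _) hptwise
    _ = (2 / δ) * (c + c') * ∫ ω, U ω ∂P := integral_const_mul _ _
end

section
/- Let τ > 0, let 0 ≤ y ≤ τ, let ε ≥ 0, and let Ŝ, S : ℝ → ℝ be functions that are nonincreasing on [y, τ], take values in [0, 1] on [y, τ], and satisfy Ŝ(τ) > 0, S(y) > 0, and |Ŝ(t) − S(t)| ≤ ε for all t ∈ [y, τ]. Define Ê = (y·Ŝ(y) + ∫_y^τ Ŝ(t) dt)/Ŝ(y) and E = (y·S(y) + ∫_y^τ S(t) dt)/S(y). Then |Ê − E| ≤ 2·τ·ε/Ŝ(τ). -/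
open MeasureTheory

/-- deterministic difference-of-ratios bound for the estimated
conditional expected survival time beyond time `y` computed from the estimated
survival curve `Ŝ` versus the true survival curve `S`. -/
theorem conditional_expected_survival_time_error_bound
    (τ : ℝ) (hτ : 0 < τ) (y : ℝ) (hy0 : 0 ≤ y) (hyτ : y ≤ τ)
    (ε : ℝ) (hε : 0 ≤ ε) (Shat S : ℝ → ℝ)
    (hShatMono : AntitoneOn Shat (Set.Icc y τ)) (hSMono : AntitoneOn S (Set.Icc y τ))
    (hShatRange : ∀ t ∈ Set.Icc y τ, Shat t ∈ Set.Icc (0 : ℝ) 1)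
    (hSRange : ∀ t ∈ Set.Icc y τ, S t ∈ Set.Icc (0 : ℝ) 1)
    (hShatτ : 0 < Shat τ) (hSy : 0 < S y)
    (hclose : ∀ t ∈ Set.Icc y τ, |Shat t - S t| ≤ ε)
    (Ehat E : ℝ)
    (hEhat : Ehat = (y * Shat y + ∫ t in y..τ, Shat t) / Shat y)
    (hE : E = (y * S y + ∫ t in y..τ, S t) / S y) :
    |Ehat - E| ≤ 2 * τ * ε / Shat τ := by
  have huIcc : Set.uIcc y τ = Set.Icc y τ := Set.uIcc_of_le hyτ
  have hInt1 : IntervalIntegrable Shat volume y τ :=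
    (huIcc ▸ hShatMono).intervalIntegrable
  have hInt2 : IntervalIntegrable S volume y τ :=
    (huIcc ▸ hSMono).intervalIntegrable
  have hBy : Shat τ ≤ Shat y :=
    hShatMono (Set.left_mem_Icc.2 hyτ) (Set.right_mem_Icc.2 hyτ) hyτ
  have hB : 0 < Shat y := lt_of_lt_of_le hShatτ hBy
  set A : ℝ := y * Shat y + ∫ t in y..τ, Shat t with hA
  set A' : ℝ := y * S y + ∫ t in y..τ, S t with hA'
  -- bound on integral difference
  have hidiff : |(∫ t in y..τ, Shat t) - ∫ t in y..τ, S t| ≤ ε * (τ - y) := by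
    rw [← intervalIntegral.integral_sub hInt1 hInt2]
    have := intervalIntegral.norm_integral_le_of_norm_le_const
      (C := ε) (f := fun t => Shat t - S t) (a := y) (b := τ) ?_
    · rw [abs_of_nonneg (by linarith)] at this
      simpa using this
    · intro x hx
      have hx' : x ∈ Set.Icc y τ := by
        rw [Set.uIoc_of_le hyτ] at hx
        exact ⟨le_of_lt hx.1, hx.2⟩
      simpa using hclose x hx'
  have hAdiff : |A - A'| ≤ τ * ε := by
    have h1 : |y * Shat y - y * S y| ≤ y * ε := by
      rw [← mul_sub, abs_mul, abs_of_nonneg hy0]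
      exact mul_le_mul_of_nonneg_left (hclose y (Set.left_mem_Icc.2 hyτ)) hy0
    calc |A - A'| = |(y * Shat y - y * S y) + ((∫ t in y..τ, Shat t) - ∫ t in y..τ, S t)| := by
          rw [hA, hA']; ring_nf
      _ ≤ |y * Shat y - y * S y| + |(∫ t in y..τ, Shat t) - ∫ t in y..τ, S t| := abs_add_le _ _
      _ ≤ y * ε + ε * (τ - y) := add_le_add h1 hidiff
      _ = τ * ε := by ring
  have hA'nonneg : 0 ≤ A' := by
    have hI : 0 ≤ ∫ t in y..τ, S t := by
      apply intervalIntegral.integral_nonneg hyτ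
      intro u hu; exact (hSRange u hu).1
    have : 0 ≤ y * S y := mul_nonneg hy0 hSy.le
    linarith
  have hA'le : A' ≤ τ * S y := by
    have hI : (∫ t in y..τ, S t) ≤ ∫ _t in y..τ, S y := by
      apply intervalIntegral.integral_mono_on hyτ hInt2 intervalIntegrable_const
      intro u hu
      exact hSMono (Set.left_mem_Icc.2 hyτ) hu hu.1
    rw [intervalIntegral.integral_const, smul_eq_mul] at hI
    have : A' ≤ y * S y + (τ - y) * S y := by rw [hA']; linarith
    linarith [this]
  have hBdiff : |Shat y - S y| ≤ ε := hclose y (Set.left_mem_Icc.2 hyτ)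
  -- main estimate
  have hnum : |A * S y - A' * Shat y| ≤ 2 * τ * ε * S y := by
    have : A * S y - A' * Shat y = (A - A') * S y + A' * (S y - Shat y) := by ring
    rw [this]
    calc |(A - A') * S y + A' * (S y - Shat y)|
        ≤ |(A - A') * S y| + |A' * (S y - Shat y)| := abs_add_le _ _
      _ = |A - A'| * S y + A' * |S y - Shat y| := by
          rw [abs_mul, abs_mul, abs_of_nonneg hSy.le, abs_of_nonneg hA'nonneg]
      _ ≤ (τ * ε) * S y + (τ * S y) * ε := by
          apply add_le_add
          · exact mul_le_mul_of_nonneg_right hAdiff hSy.le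
          · rw [abs_sub_comm]
            exact mul_le_mul hA'le hBdiff (abs_nonneg _) (by positivity)
      _ = 2 * τ * ε * S y := by ring
  have hmain : |Ehat - E| ≤ 2 * τ * ε / Shat y := by
    rw [hEhat, hE, div_sub_div _ _ (ne_of_gt hB) (ne_of_gt hSy), abs_div,
      abs_of_pos (mul_pos hB hSy)]
    rw [div_le_div_iff₀ (mul_pos hB hSy) hB, mul_comm (Shat y) A']
    calc |A * S y - A' * Shat y| * Shat y ≤ (2 * τ * ε * S y) * Shat y :=
          mul_le_mul_of_nonneg_right hnum hB.le
      _ = 2 * τ * ε * (Shat y * S y) := by ring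
  refine hmain.trans ?_
  exact div_le_div_of_nonneg_left (by positivity) hShatτ hBy
end

section
/- Let (Ω, ℱ, P) be a probability space, 𝒳 a measurable space, X : Ω → 𝒳 measurable, m ≥ 1, A : Ω → Fin m measurable, and for each a ∈ Fin m let T_a : Ω → ℝ be a bounded measurable potential outcome. Let 𝒢 = σ(X) be the σ-algebra generated by X. Suppose there are measurable functions φ_a, μ_a : 𝒳 → ℝ and a constant α ≥ 1 such that, for every a ∈ Fin m: (i) E[1{A = a} | 𝒢] = φ_a ∘ X almost everywhere; (ii) E[1{A = a}·T_a | 𝒢] = (φ_a ∘ X)·(μ_a ∘ X) almost everywhere; and (iii) φ_a ∘ X ≥ 1/α almost everywhere. Let π_a : 𝒳 → ℝ be bounded measurable functions. Then E[Σ_{a=1}^m 1{A = a}·π_a(X)·T_a/φ_a(X)] = E[Σ_{a=1}^m π_a(X)·μ_a(X)]. -/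
open MeasureTheory Finset

/-- unbiasedness of inverse propensity weighting under
conditional exchangeability and strong overlap. -/
theorem ipw_unbiased
    {Ω : Type*} {ℱ : MeasurableSpace Ω} (P : Measure Ω) [IsProbabilityMeasure P]
    {𝒳 : Type*} [m𝒳 : MeasurableSpace 𝒳] (X : Ω → 𝒳) (hX : Measurable X)
    (m : ℕ) (hm : 1 ≤ m) (A : Ω → Fin m) (hA : Measurable A)
    (T : Fin m → Ω → ℝ) (hTmeas : ∀ a, Measurable (T a))
    (CT : ℝ) (hTBdd : ∀ a ω, |T a ω| ≤ CT)
    (𝒢 : MeasurableSpace Ω) (h𝒢 : 𝒢 = MeasurableSpace.comap X m𝒳)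
    (φ μ : Fin m → 𝒳 → ℝ) (hφ : ∀ a, Measurable (φ a)) (hμ : ∀ a, Measurable (μ a))
    (α : ℝ) (hα : 1 ≤ α)
    (hProp : ∀ a, P[fun ω => if A ω = a then (1 : ℝ) else 0 | 𝒢]
      =ᵐ[P] fun ω => φ a (X ω))
    (hExch : ∀ a, P[fun ω => (if A ω = a then (1 : ℝ) else 0) * T a ω | 𝒢]
      =ᵐ[P] fun ω => φ a (X ω) * μ a (X ω))
    (hOverlap : ∀ a, ∀ᵐ ω ∂P, 1 / α ≤ φ a (X ω))
    (π : Fin m → 𝒳 → ℝ) (hπ : ∀ a, Measurable (π a))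
    (Cπ : ℝ) (hπBdd : ∀ a x, |π a x| ≤ Cπ) :
    ∫ ω, ∑ a : Fin m, (if A ω = a then (1 : ℝ) else 0) * π a (X ω) * T a ω / φ a (X ω) ∂P
      = ∫ ω, ∑ a : Fin m, π a (X ω) * μ a (X ω) ∂P := by
  have hαpos : (0 : ℝ) < α := lt_of_lt_of_le one_pos hα
  have h𝒢le : 𝒢 ≤ ℱ := by rw [h𝒢]; exact measurable_iff_comap_le.mp hX
  have hX𝒢 : Measurable[𝒢] X := by
    rw [h𝒢]; exact measurable_iff_comap_le.mpr le_rfl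
  -- indicator function and its properties
  set ind : Fin m → Ω → ℝ := fun a ω => if A ω = a then (1 : ℝ) else 0 with hind
  have hindmeas : ∀ a, Measurable[ℱ] (ind a) := fun a =>
    Measurable.ite (hA (measurableSet_singleton a)) measurable_const measurable_const
  have hindbd : ∀ a ω, |ind a ω| ≤ 1 := by
    intro a ω; by_cases h : A ω = a <;> simp [ind, h]
  -- the "g" weight function
  set g : Fin m → Ω → ℝ := fun a ω => π a (X ω) / φ a (X ω) with hg
  -- a.e. positivity and bounds from overlap
  have hφpos : ∀ a, ∀ᵐ ω ∂P, 0 < φ a (X ω) := by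
    intro a
    filter_upwards [hOverlap a] with ω h
    exact lt_of_lt_of_le (by positivity) h
  have hinv : ∀ a, ∀ᵐ ω ∂P, (φ a (X ω))⁻¹ ≤ α := by
    intro a
    filter_upwards [hOverlap a, hφpos a] with ω h hpos
    rw [inv_le_comm₀ hpos hαpos] at *
    calc α⁻¹ = 1 / α := (one_div α).symm
      _ ≤ φ a (X ω) := h
  have hgbd : ∀ a, ∀ᵐ ω ∂P, |g a ω| ≤ Cπ * α := by
    intro a
    filter_upwards [hinv a, hφpos a] with ω h hpos
    have h0 : (0:ℝ) ≤ Cπ := le_trans (abs_nonneg _) (hπBdd a (X ω))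
    have : |g a ω| = |π a (X ω)| * (φ a (X ω))⁻¹ := by
      rw [hg]; rw [abs_div, abs_of_pos hpos, div_eq_mul_inv]
    rw [this]
    exact mul_le_mul (hπBdd a (X ω)) h (inv_nonneg.mpr hpos.le) h0
  -- f = indicator * outcome
  have hfmeas : ∀ a, Measurable[ℱ] (fun ω => ind a ω * T a ω) := fun a =>
    (hindmeas a).mul (hTmeas a)
  have hfbd : ∀ a ω, |ind a ω * T a ω| ≤ CT := by
    intro a ω
    rw [abs_mul]
    calc |ind a ω| * |T a ω| ≤ 1 * CT := by
          exact mul_le_mul (hindbd a ω) (hTBdd a ω) (abs_nonneg _)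
            (le_trans (abs_nonneg _) (hindbd a ω))
      _ = CT := one_mul CT
  have hfint : ∀ a, Integrable (fun ω => ind a ω * T a ω) P := by
    intro a
    refine Integrable.mono' (integrable_const CT) (hfmeas a).aestronglyMeasurable ?_
    exact Filter.Eventually.of_forall fun ω => by
      rw [Real.norm_eq_abs]; exact hfbd a ω
  have hgmeas : ∀ a, Measurable[ℱ] (g a) := fun a => ((hπ a).comp hX).div ((hφ a).comp hX)
  have hgmeas𝒢 : ∀ a, StronglyMeasurable[𝒢] (g a) := fun a =>
    (((hπ a).div (hφ a)).comp hX𝒢).stronglyMeasurable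
  have hgfint : ∀ a, Integrable (g a * fun ω => ind a ω * T a ω) P := by
    intro a
    refine Integrable.mono' (integrable_const (Cπ * α * CT))
      ((hgmeas a).mul (hfmeas a)).aestronglyMeasurable ?_
    filter_upwards [hgbd a] with ω h
    have hCb : (0:ℝ) ≤ Cπ * α := le_trans (abs_nonneg _) (le_trans (hπBdd a (X ω)) ?_)
    · simp only [Pi.mul_apply, Real.norm_eq_abs]
      rw [abs_mul]
      exact mul_le_mul h (hfbd a ω) (abs_nonneg _) hCb
    · nlinarith [le_trans (abs_nonneg (π a (X ω))) (hπBdd a (X ω))]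
  -- bound on conditional expectation hence on φ*μ and π*μ
  have hcondbd : ∀ a, ∀ᵐ ω ∂P,
      |φ a (X ω) * μ a (X ω)| ≤ (CT.toNNReal : ℝ) := by
    intro a
    have hb : ∀ᵐ ω ∂P, |ind a ω * T a ω| ≤ (CT.toNNReal : ℝ) :=
      Filter.Eventually.of_forall fun ω =>
        le_trans (hfbd a ω) (Real.le_coe_toNNReal CT)
    filter_upwards [ae_bdd_condExp_of_ae_bdd hb, hExch a] with ω h1 h2
    rw [← h2]; exact h1
  have hπμbd : ∀ a, ∀ᵐ ω ∂P,
      |π a (X ω) * μ a (X ω)| ≤ Cπ * (α * (CT.toNNReal : ℝ)) := by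
    intro a
    filter_upwards [hcondbd a, hOverlap a, hφpos a, hinv a] with ω h1 h2 hpos hin
    have hμb : |μ a (X ω)| ≤ α * (CT.toNNReal : ℝ) := by
      have : |μ a (X ω)| = (φ a (X ω))⁻¹ * |φ a (X ω) * μ a (X ω)| := by
        rw [abs_mul, abs_of_pos hpos]
        field_simp
      rw [this]
      exact mul_le_mul hin h1 (abs_nonneg _) hαpos.le
    rw [abs_mul]
    exact mul_le_mul (hπBdd a (X ω)) hμb (abs_nonneg _)
      (le_trans (abs_nonneg _) (hπBdd a (X ω)))
  have hπμint : ∀ a, Integrable (fun ω => π a (X ω) * μ a (X ω)) P := by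
    intro a
    refine Integrable.mono' (integrable_const (Cπ * (α * (CT.toNNReal : ℝ))))
      (((hπ a).comp hX).mul ((hμ a).comp hX)).aestronglyMeasurable ?_
    filter_upwards [hπμbd a] with ω h
    rw [Real.norm_eq_abs]; exact h
  -- identify the LHS integrand termwise with g * f
  have hterm_eq : ∀ a, (fun ω => ind a ω * π a (X ω) * T a ω / φ a (X ω))
      = g a * fun ω => ind a ω * T a ω := by
    intro a; funext ω; simp only [Pi.mul_apply, hg]; ring
  have hLint : ∀ a, Integrable (fun ω => ind a ω * π a (X ω) * T a ω / φ a (X ω)) P := by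
    intro a; rw [hterm_eq a]; exact hgfint a
  -- key per-a identity
  have key : ∀ a, ∫ ω, ind a ω * π a (X ω) * T a ω / φ a (X ω) ∂P
      = ∫ ω, π a (X ω) * μ a (X ω) ∂P := by
    intro a
    have h1 : ∫ ω, ind a ω * π a (X ω) * T a ω / φ a (X ω) ∂P
        = ∫ ω, (g a * fun ω => ind a ω * T a ω) ω ∂P := by
      rw [hterm_eq a]
    rw [h1]
    rw [← integral_condExp h𝒢le]
    have hpull := condExp_mul_of_stronglyMeasurable_left (hgmeas𝒢 a) (hgfint a) (hfint a)
    rw [integral_congr_ae hpull]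
    have h2 : (g a * P[fun ω => ind a ω * T a ω|𝒢])
        =ᵐ[P] fun ω => π a (X ω) * μ a (X ω) := by
      filter_upwards [hExch a, hOverlap a, hφpos a] with ω hE hO hpos
      simp only [Pi.mul_apply, hg]
      rw [hE]
      field_simp
    exact integral_congr_ae h2
  rw [integral_finset_sum _ (fun a _ => hLint a), integral_finset_sum _ (fun a _ => hπμint a)]
  exact Finset.sum_congr rfl fun a _ => key a
end

section
/- Let (Ω, ℱ, P) be a probability space, τ > 0, and T, C : Ω → ℝ independent random variables with 0 ≤ T ≤ τ almost everywhere. Define G : ℝ → ℝ by G(t) = P(C ≥ t) and suppose G(τ) > 0. Let Y = min(T, C) and Δ = 1{T ≤ C}. Then E[Δ·Y/G(Y)] = E[T]. -/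
/-!
Condition on the failure time: by independence, `E[1{T ≤ C} g(T)] = E[g(T) G(T)]` for any
integrable `g`, since for a fixed failure time `t` the censoring time exceeds it with probability
`G(t)`. Taking `g(t) = t / G(t)` the weight cancels, which is legitimate because `T ≤ τ` a.s. and
`G` is antitone, so `G(T) ≥ G(τ) > 0` a.s.
-/

open MeasureTheory ProbabilityTheory

section

variable {Ω : Type*} {mΩ : MeasurableSpace Ω} {P : Measure Ω}

lemma antitone_measureReal_setOf_le [IsFiniteMeasure P] {α : Type*} [Preorder α] (C : Ω → α) :
    Antitone fun t => P.real {ω | t ≤ C ω} :=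
  fun _ _ hst => measureReal_mono fun _ hω => hst.trans hω

lemma ProbabilityTheory.IndepFun.integral_comp_eq_integral_integral [IsFiniteMeasure P]
    {α β E : Type*} [MeasurableSpace α] [MeasurableSpace β]
    [NormedAddCommGroup E] [NormedSpace ℝ E] {X : Ω → α} {Y : Ω → β}
    (hXY : IndepFun X Y P) (hX : AEMeasurable X P) (hY : AEMeasurable Y P)
    {f : α × β → E} (hf : Integrable f ((P.map X).prod (P.map Y))) :
    ∫ ω, f (X ω, Y ω) ∂P = ∫ x, ∫ y, f (x, y) ∂(P.map Y) ∂(P.map X) := by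
  have h_law : P.map (fun ω => (X ω, Y ω)) = (P.map X).prod (P.map Y) :=
    (indepFun_iff_map_prod_eq_prod_map_map hX hY).mp hXY
  rw [← integral_prod f hf, ← h_law,
    integral_map (hX.prodMk hY) (h_law ▸ hf.aestronglyMeasurable)]

lemma ProbabilityTheory.IndepFun.integral_ite_le_eq_integral_mul_measureReal
    [IsFiniteMeasure P] {T C : Ω → ℝ} (hTC : IndepFun T C P)
    (hT : AEMeasurable T P) (hC : AEMeasurable C P) {g : ℝ → ℝ} (hg : Integrable g (P.map T)) :
    ∫ ω, (if T ω ≤ C ω then g (T ω) else 0) ∂P =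
      ∫ ω, g (T ω) * P.real {ω' | T ω ≤ C ω'} ∂P := by
  set f : ℝ × ℝ → ℝ := {p | p.1 ≤ p.2}.indicator fun p => g p.1
  have hf : Integrable f ((P.map T).prod (P.map C)) :=
    (hg.comp_fst _).indicator (measurableSet_le measurable_fst measurable_snd)
  have h_inner (t : ℝ) : ∫ c, f (t, c) ∂(P.map C) = g t * P.real {ω | t ≤ C ω} := by
    have : (fun c => f (t, c)) = (Set.Ici t).indicator fun _ => g t := by
      ext c; simp [f, Set.indicator]
    rw [this, integral_indicator_const _ measurableSet_Ici,
      map_measureReal_apply_of_aemeasurable hC measurableSet_Ici, smul_eq_mul, mul_comm]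
    rfl
  calc ∫ ω, (if T ω ≤ C ω then g (T ω) else 0) ∂P = ∫ ω, f (T ω, C ω) ∂P := by
        simp [f, Set.indicator]
    _ = ∫ t, g t * P.real {ω | t ≤ C ω} ∂(P.map T) := by
        rw [hTC.integral_comp_eq_integral_integral hT hC hf]
        simp only [h_inner]
    _ = ∫ ω, g (T ω) * P.real {ω' | T ω ≤ C ω'} ∂P :=
        integral_map hT <| hg.aestronglyMeasurable.mul
          (antitone_measureReal_setOf_le C).measurable.aestronglyMeasurable

end

theorem ipcw_unbiased_general
    {Ω : Type*} {ℱ : MeasurableSpace Ω} (P : Measure Ω) [IsProbabilityMeasure P]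
    (τ : ℝ)
    (T C : Ω → ℝ) (hT : Measurable T) (hC : Measurable C)
    (hIndep : IndepFun T C P)
    (hT0 : ∀ᵐ ω ∂P, 0 ≤ T ω) (hTτ : ∀ᵐ ω ∂P, T ω ≤ τ)
    (G : ℝ → ℝ) (hG : ∀ t, G t = (P {ω | t ≤ C ω}).toReal) (hGτ : 0 < G τ)
    (Y : Ω → ℝ) (hY : ∀ ω, Y ω = min (T ω) (C ω))
    (Δ : Ω → ℝ) (hΔ : ∀ ω, Δ ω = if T ω ≤ C ω then (1 : ℝ) else 0) :
    ∫ ω, Δ ω * Y ω / G (Y ω) ∂P = ∫ ω, T ω ∂P := by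
  have hG_eq : G = fun t => P.real {ω | t ≤ C ω} := funext hG
  have hG_anti : Antitone G := hG_eq ▸ antitone_measureReal_setOf_le C
  have hG_pos {t : ℝ} (ht : t ≤ τ) : 0 < G t := hGτ.trans_le (hG_anti ht)
  have hT_Icc : ∀ᵐ t ∂P.map T, t ∈ Set.Icc 0 τ :=
    (ae_map_iff hT.aemeasurable measurableSet_Icc).2 (hT0.and hTτ)
  have h_int : Integrable (fun t => t / G t) (P.map T) := by
    refine (integrable_const (τ / G τ)).mono'
      (measurable_id.div hG_anti.measurable).aestronglyMeasurable
      (hT_Icc.mono fun t ⟨ht0, htτ⟩ => ?_)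
    rw [Real.norm_eq_abs, abs_of_nonneg (div_nonneg ht0 (hG_pos htτ).le)]
    exact div_le_div₀ (ht0.trans htτ) htτ hGτ (hG_anti htτ)
  calc ∫ ω, Δ ω * Y ω / G (Y ω) ∂P
      = ∫ ω, (if T ω ≤ C ω then T ω / G (T ω) else 0) ∂P := by
        congr with ω
        by_cases h : T ω ≤ C ω <;> simp [hΔ, hY, h]
    _ = ∫ ω, T ω / G (T ω) * G (T ω) ∂P := by
        rw [hIndep.integral_ite_le_eq_integral_mul_measureReal hT.aemeasurable hC.aemeasurable
          h_int, hG_eq]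
    _ = ∫ ω, T ω ∂P :=
        integral_congr_ae <| hTτ.mono fun ω hω => div_mul_cancel₀ _ (hG_pos hω).ne'

/-- unbiasedness of inverse probability of censoring weighting
(IPCW): `E[Δ·Y/G(Y)] = E[T]` where `Y = min(T, C)`, `Δ = 1{T ≤ C}` and
`G(t) = P(C ≥ t)` with `G(τ) > 0`. -/
theorem ipcw_unbiased
    {Ω : Type*} {ℱ : MeasurableSpace Ω} (P : Measure Ω) [IsProbabilityMeasure P]
    (τ : ℝ) (hτ : 0 < τ)
    (T C : Ω → ℝ) (hT : Measurable T) (hC : Measurable C)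
    (hIndep : IndepFun T C P)
    (hT0 : ∀ᵐ ω ∂P, 0 ≤ T ω) (hTτ : ∀ᵐ ω ∂P, T ω ≤ τ)
    (G : ℝ → ℝ) (hG : ∀ t, G t = (P {ω | t ≤ C ω}).toReal) (hGτ : 0 < G τ)
    (Y : Ω → ℝ) (hY : ∀ ω, Y ω = min (T ω) (C ω))
    (Δ : Ω → ℝ) (hΔ : ∀ ω, Δ ω = if T ω ≤ C ω then (1 : ℝ) else 0) :
    ∫ ω, Δ ω * Y ω / G (Y ω) ∂P = ∫ ω, T ω ∂P :=
  ipcw_unbiased_general (ℱ := ℱ) P τ T C hT hC hIndep hT0 hTτ G hG hGτ Y hY Δ hΔ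
end
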